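/- Let β < −2, α < 2β − 1 with α + 4 < 0, κ_g ≥ 16, and |γ_j| ≤ c_g|j|^α for |j| ≥ κ_g. Then for all k ∈ ℤ^3 with |k| ≥ 2κ_g, Σ'_j |k−j|^β |j| |γ_j| ≤ C(g,β) min{1, (2κ_g)^{−β}|k|^β} for a constant C depending on Σ'_j|j||γ_j|, c_g, β, α, κ_g. -/

import Mathlib

/-!
Split the sum at `|j| = |k|/2`. For `|j| ≤ |k|/2` we have `|k - j| ≥ |k|/2`, so these terms are at
most `(|k|/2)^β |j| |γ_j|`. For `|j| > |k|/2 ≥ κ_g` the power law and `1 + α - 2β ≤ 0` give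
`|j| |γ_j| ≤ c_g |j|^(1+α) ≤ c_g κ_g^(1+α-2β) (|k|/2)^β |j|^β`, and by `ab ≤ (a² + b²)/2` the
convolution `Σ_j |k - j|^β |j|^β` is at most `Σ_m |m|^(2β)`, finite since `2β < -3`. Altogether the
sum is `≤ (|k|/2)^β (Σ'|j||γ_j| + c_g κ_g^(1+α-2β) Σ_m |m|^(2β))`, and
`(|k|/2)^β = κ_g^β (2κ_g)^(-β) |k|^β` with `(2κ_g)^(-β) |k|^β ≤ 1`.
-/

/-- Euclidean norm of a point of the integer lattice `ℤ³`. -/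
noncomputable def enorm3 (k : Fin 3 → ℤ) : ℝ :=
  Real.sqrt (∑ i, ((k i : ℝ)) ^ 2)

lemma enorm3_eq_norm (k : Fin 3 → ℤ) :
    enorm3 k = ‖(WithLp.toLp 2 fun i => (k i : ℝ) : EuclideanSpace ℝ (Fin 3))‖ := by
  simp [enorm3, EuclideanSpace.norm_eq]

lemma enorm3_nonneg (k : Fin 3 → ℤ) : 0 ≤ enorm3 k := Real.sqrt_nonneg _

lemma enorm3_zero : enorm3 0 = 0 := by simp [enorm3]

lemma enorm3_le_enorm3_sub_add (k j : Fin 3 → ℤ) : enorm3 k ≤ enorm3 (k - j) + enorm3 j := by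
  have hsplit : (WithLp.toLp 2 fun i => (k i : ℝ) : EuclideanSpace ℝ (Fin 3)) =
      (WithLp.toLp 2 fun i => ((k - j) i : ℝ)) + WithLp.toLp 2 fun i => (j i : ℝ) := by
    ext i
    simp
  simp only [enorm3_eq_norm, hsplit]
  exact norm_add_le _ _

lemma summable_enorm3_rpow {q : ℝ} (hq : q < -3) :
    Summable fun m : Fin 3 → ℤ => enorm3 m ^ q := by
  let b := (EuclideanSpace.basisFun (Fin 3) ℝ).toBasis
  let e := (b.restrictScalars ℤ).equivFun.symm
  have he (m : Fin 3 → ℤ) :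
      (e m : EuclideanSpace ℝ (Fin 3)) = WithLp.toLp 2 fun i => (m i : ℝ) := by
    ext i
    rw [Module.Basis.equivFun_symm_apply]
    simp only [Submodule.coe_sum, Submodule.coe_smul_of_tower, Module.Basis.restrictScalars_apply]
    simp [b, Pi.single_apply]
  have hrank : Module.finrank ℤ (Submodule.span ℤ (Set.range b)) = 3 := by
    simp [Module.finrank_eq_card_basis (b.restrictScalars ℤ)]
  have hL := ZLattice.summable_norm_rpow (Submodule.span ℤ (Set.range b)) q
    (by rw [hrank]; exact_mod_cast hq)
  refine (e.toEquiv.summable_iff.mpr hL).congr fun m => ?_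
  simp [e, ← he, enorm3_eq_norm]

lemma abs_mul_le_add_sq_div_two (a b : ℝ) : |a * b| ≤ (a ^ 2 + b ^ 2) / 2 := by
  have h := two_mul_le_add_sq |a| |b|
  rw [sq_abs, sq_abs, mul_assoc, ← abs_mul] at h
  linarith

section Convolution

variable {G : Type*} [AddCommGroup G] {f : G → ℝ}

lemma summable_sq_comp_sub (hf : Summable fun x => f x ^ 2) (k : G) :
    Summable fun j => f (k - j) ^ 2 :=
  (Equiv.subLeft k).summable_iff.mpr hf

lemma summable_mul_comp_sub (hf : Summable fun x => f x ^ 2) (k : G) :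
    Summable fun j => f (k - j) * f j :=
  .of_norm_bounded (((summable_sq_comp_sub hf k).add hf).div_const 2)
    fun _ => abs_mul_le_add_sq_div_two _ _

lemma tsum_mul_comp_sub_le (hf : Summable fun x => f x ^ 2) (k : G) :
    ∑' j, f (k - j) * f j ≤ ∑' x, f x ^ 2 := by
  have hshift : ∑' j, f (k - j) ^ 2 = ∑' x, f x ^ 2 :=
    (Equiv.subLeft k).tsum_eq fun x => f x ^ 2
  calc ∑' j, f (k - j) * f j ≤ ∑' j, (f (k - j) ^ 2 + f j ^ 2) / 2 :=
        (summable_mul_comp_sub hf k).tsum_le_tsum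
          (fun j => (le_abs_self _).trans (abs_mul_le_add_sq_div_two _ _))
          (((summable_sq_comp_sub hf k).add hf).div_const 2)
    _ = ∑' x, f x ^ 2 := by
      rw [tsum_div_const, (summable_sq_comp_sub hf k).tsum_add hf, hshift, add_self_div_two]

end Convolution

lemma self_mul_rpow_le {x y κ α β : ℝ} (hκ : 0 < κ) (hκy : κ ≤ y) (hyx : y ≤ x) (hβ : β < 0)
    (hαβ : 1 + α - 2 * β ≤ 0) : x * x ^ α ≤ κ ^ (1 + α - 2 * β) * y ^ β * x ^ β := by
  have hy : 0 < y := hκ.trans_le hκy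
  have hx : 0 < x := hy.trans_le hyx
  calc x * x ^ α = x ^ (1 + α - β) * x ^ β := by
        rw [← Real.rpow_add hx, ← Real.rpow_one_add' hx.le (by linarith)]; ring_nf
    _ ≤ y ^ (1 + α - β) * x ^ β := by
        gcongr ?_ * _
        exact Real.rpow_le_rpow_of_nonpos hy hyx (by linarith)
    _ = y ^ (1 + α - 2 * β) * y ^ β * x ^ β := by
        rw [← Real.rpow_add hy]; ring_nf
    _ ≤ κ ^ (1 + α - 2 * β) * y ^ β * x ^ β := by
        gcongr ?_ * _ * _
        exact Real.rpow_le_rpow_of_nonpos hκ hκy hαβ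

lemma rpow_neg_mul_rpow_le_one {a b β : ℝ} (ha : 0 < a) (hab : a ≤ b) (hβ : β ≤ 0) :
    a ^ (-β) * b ^ β ≤ 1 := by
  calc a ^ (-β) * b ^ β ≤ a ^ (-β) * a ^ β := by
        gcongr _ * ?_
        exact Real.rpow_le_rpow_of_nonpos ha hab hβ
    _ = 1 := by rw [← Real.rpow_add ha, neg_add_cancel, Real.rpow_zero]

lemma div_two_rpow_eq {κ b β : ℝ} (hκ : 0 < κ) (hb : 0 ≤ b) :
    (b / 2) ^ β = κ ^ β * ((2 * κ) ^ (-β) * b ^ β) := by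
  rw [Real.div_rpow hb zero_le_two, Real.mul_rpow zero_le_two hκ.le, Real.rpow_neg zero_le_two,
    Real.rpow_neg hκ.le]
  have : κ ^ β ≠ 0 := (Real.rpow_pos_of_pos hκ β).ne'
  field_simp

section FirstIterate

variable {β α cg κg : ℝ} {γ : (Fin 3 → ℤ) → ℂ}

lemma rpow_enorm3_sub_mul_le (hβ : β < 0) (hαβ : 1 + α - 2 * β ≤ 0) (hcg : 0 ≤ cg)
    (hκg : 0 < κg) (hpow : ∀ j : Fin 3 → ℤ, κg ≤ enorm3 j → ‖γ j‖ ≤ cg * enorm3 j ^ α)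
    {k : Fin 3 → ℤ} (hk : 2 * κg ≤ enorm3 k) (j : Fin 3 → ℤ) :
    enorm3 (k - j) ^ β * enorm3 j * ‖γ j‖ ≤
      (enorm3 k / 2) ^ β * (enorm3 j * ‖γ j‖ +
        cg * κg ^ (1 + α - 2 * β) * (enorm3 (k - j) ^ β * enorm3 j ^ β)) := by
  have hkj : 0 ≤ enorm3 (k - j) ^ β := Real.rpow_nonneg (enorm3_nonneg _) _
  have hj : 0 ≤ enorm3 j ^ β := Real.rpow_nonneg (enorm3_nonneg _) _
  have hhalf : 0 ≤ (enorm3 k / 2) ^ β := Real.rpow_nonneg (by linarith) _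
  rcases le_or_gt (enorm3 j) (enorm3 k / 2) with hnear | hfar
  · have hkj_ge : enorm3 k / 2 ≤ enorm3 (k - j) := by
      linarith [enorm3_le_enorm3_sub_add k j]
    calc enorm3 (k - j) ^ β * enorm3 j * ‖γ j‖
        ≤ (enorm3 k / 2) ^ β * (enorm3 j * ‖γ j‖) := by
          rw [mul_assoc]
          exact mul_le_mul_of_nonneg_right
            (Real.rpow_le_rpow_of_nonpos (by linarith) hkj_ge hβ.le)
            (mul_nonneg (enorm3_nonneg j) (norm_nonneg _))
      _ ≤ _ := by
          gcongr
          exact le_add_of_nonneg_right (by positivity)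
  · have hγj := hpow j (by linarith)
    calc enorm3 (k - j) ^ β * enorm3 j * ‖γ j‖
        ≤ enorm3 (k - j) ^ β * (enorm3 j * (cg * enorm3 j ^ α)) := by
          rw [mul_assoc]
          exact mul_le_mul_of_nonneg_left
            (mul_le_mul_of_nonneg_left hγj (enorm3_nonneg j)) hkj
      _ = enorm3 (k - j) ^ β * (cg * (enorm3 j * enorm3 j ^ α)) := by ring
      _ ≤ enorm3 (k - j) ^ β *
            (cg * (κg ^ (1 + α - 2 * β) * (enorm3 k / 2) ^ β * enorm3 j ^ β)) :=
          mul_le_mul_of_nonneg_left (mul_le_mul_of_nonneg_left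
            (self_mul_rpow_le hκg (by linarith) hfar.le hβ hαβ) hcg) hkj
      _ ≤ _ := by
          rw [mul_add]
          refine le_add_of_nonneg_of_le
            (mul_nonneg hhalf (mul_nonneg (enorm3_nonneg j) (norm_nonneg _))) (le_of_eq ?_)
          ring

lemma tsum_rpow_enorm3_sub_mul_le (hβ : β < -3 / 2) (hαβ : 1 + α - 2 * β ≤ 0) (hcg : 0 ≤ cg)
    (hκg : 0 < κg) (hsum : Summable fun j : Fin 3 → ℤ => enorm3 j * ‖γ j‖)
    (hpow : ∀ j : Fin 3 → ℤ, κg ≤ enorm3 j → ‖γ j‖ ≤ cg * enorm3 j ^ α)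
    {k : Fin 3 → ℤ} (hk : 2 * κg ≤ enorm3 k) :
    ∑' j, enorm3 (k - j) ^ β * enorm3 j * ‖γ j‖ ≤
      (enorm3 k / 2) ^ β * (∑' j, enorm3 j * ‖γ j‖ +
        cg * κg ^ (1 + α - 2 * β) * ∑' m, enorm3 m ^ (2 * β)) := by
  have hsq_eq (m : Fin 3 → ℤ) : (enorm3 m ^ β) ^ 2 = enorm3 m ^ (2 * β) := by
    rw [← Real.rpow_natCast, ← Real.rpow_mul (enorm3_nonneg m), mul_comm]
    norm_num
  have hsq : Summable fun m : Fin 3 → ℤ => (enorm3 m ^ β) ^ 2 :=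
    (summable_enorm3_rpow (by linarith)).congr fun m => (hsq_eq m).symm
  have hconv_le : ∑' j, enorm3 (k - j) ^ β * enorm3 j ^ β ≤ ∑' m, enorm3 m ^ (2 * β) :=
    (tsum_mul_comp_sub_le hsq k).trans_eq (tsum_congr hsq_eq)
  have hconv := summable_mul_comp_sub hsq k
  have hmajor := (hsum.add (hconv.mul_left (cg * κg ^ (1 + α - 2 * β)))).mul_left
    ((enorm3 k / 2) ^ β)
  have hbound := rpow_enorm3_sub_mul_le (γ := γ) (by linarith) hαβ hcg hκg hpow hk
  have hterm_nonneg (j : Fin 3 → ℤ) : 0 ≤ enorm3 (k - j) ^ β * enorm3 j * ‖γ j‖ :=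
    mul_nonneg (mul_nonneg (Real.rpow_nonneg (enorm3_nonneg _) _) (enorm3_nonneg _)) (norm_nonneg _)
  calc ∑' j, enorm3 (k - j) ^ β * enorm3 j * ‖γ j‖
      ≤ ∑' j, (enorm3 k / 2) ^ β * (enorm3 j * ‖γ j‖ +
          cg * κg ^ (1 + α - 2 * β) * (enorm3 (k - j) ^ β * enorm3 j ^ β)) :=
        (hmajor.of_nonneg_of_le hterm_nonneg hbound).tsum_le_tsum hbound hmajor
    _ ≤ _ := by
      rw [tsum_mul_left, hsum.tsum_add (hconv.mul_left _), tsum_mul_left]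
      have hhalf : 0 ≤ (enorm3 k / 2) ^ β := Real.rpow_nonneg (by linarith) _
      exact mul_le_mul_of_nonneg_left (add_le_add_right (mul_le_mul_of_nonneg_left hconv_le
        (mul_nonneg hcg (Real.rpow_nonneg hκg.le _))) _) hhalf

lemma ite_rpow_enorm3_sub_mul_eq (hβ : β ≠ 0) (k j : Fin 3 → ℤ) :
    (if j ≠ 0 ∧ j ≠ k then enorm3 (k - j) ^ β * enorm3 j * ‖γ j‖ else 0) =
      enorm3 (k - j) ^ β * enorm3 j * ‖γ j‖ := by
  refine ite_eq_left_iff.mpr fun h => ?_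
  rcases not_and_or.mp h with hj | hj <;> rw [not_not] at hj <;> subst hj
  · simp [enorm3_zero]
  · simp [enorm3_zero, Real.zero_rpow hβ]

end FirstIterate

theorem first_iterate_pointwise_bound_general
    (β α cg κg : ℝ) (γ : (Fin 3 → ℤ) → ℂ)
    (hβ : β < -2) (hα : α < 2 * β - 1)
    (hcg : 0 ≤ cg) (hκg : 16 ≤ κg)
    (hsum : Summable fun j : Fin 3 → ℤ => enorm3 j * ‖γ j‖)
    (hpow : ∀ j : Fin 3 → ℤ, κg ≤ enorm3 j → ‖γ j‖ ≤ cg * enorm3 j ^ α) :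
    ∃ C > (0:ℝ), ∀ k : Fin 3 → ℤ, 2 * κg ≤ enorm3 k →
      (∑' j : Fin 3 → ℤ,
          if j ≠ 0 ∧ j ≠ k then
            enorm3 (k - j) ^ β * enorm3 j * ‖γ j‖
          else 0) ≤
        C * min 1 ((2 * κg) ^ (-β) * enorm3 k ^ β) := by
  have hκg0 : 0 < κg := by linarith
  set M := ∑' j, enorm3 j * ‖γ j‖
  set D := cg * κg ^ (1 + α - 2 * β)
  set S := ∑' m : Fin 3 → ℤ, enorm3 m ^ (2 * β)
  have hM : 0 ≤ M := tsum_nonneg fun j => mul_nonneg (enorm3_nonneg j) (norm_nonneg _)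
  have hD : 0 ≤ D := mul_nonneg hcg (Real.rpow_nonneg hκg0.le _)
  have hS : 0 ≤ S := tsum_nonneg fun m => Real.rpow_nonneg (enorm3_nonneg m) _
  refine ⟨κg ^ β * (M + D * S + 1), by positivity, fun k hk => ?_⟩
  rw [min_eq_right (rpow_neg_mul_rpow_le_one (by linarith) hk (by linarith)),
    tsum_congr (ite_rpow_enorm3_sub_mul_eq (by linarith) k)]
  calc _ ≤ (enorm3 k / 2) ^ β * (M + D * S) :=
        tsum_rpow_enorm3_sub_mul_le (by linarith) (by linarith) hcg hκg0 hsum hpow hk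
    _ ≤ (enorm3 k / 2) ^ β * (M + D * S + 1) :=
        mul_le_mul_of_nonneg_left (by linarith) (Real.rpow_nonneg (by linarith) _)
    _ = _ := by rw [div_two_rpow_eq hκg0 (enorm3_nonneg k)]; ring

theorem first_iterate_pointwise_bound
    (β α cg κg : ℝ) (γ : (Fin 3 → ℤ) → ℂ)
    (hβ : β < -2) (hα : α < 2 * β - 1) (hα4 : α + 4 < 0)
    (hcg : 0 ≤ cg) (hκg : 16 ≤ κg) (hγ0 : γ 0 = 0)
    (hsum : Summable fun j : Fin 3 → ℤ => enorm3 j * ‖γ j‖)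
    (hpow : ∀ j : Fin 3 → ℤ, κg ≤ enorm3 j → ‖γ j‖ ≤ cg * enorm3 j ^ α) :
    ∃ C > (0:ℝ), ∀ k : Fin 3 → ℤ, 2 * κg ≤ enorm3 k →
      (∑' j : Fin 3 → ℤ,
          if j ≠ 0 ∧ j ≠ k then
            enorm3 (k - j) ^ β * enorm3 j * ‖γ j‖
          else 0) ≤
        C * min 1 ((2 * κg) ^ (-β) * enorm3 k ^ β) :=
  first_iterate_pointwise_bound_general β α cg κg γ hβ hα hcg hκg hsum hpow
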